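/- Let G=(V,E) be a locally finite graph with symmetric positive edge weights, μ(x) ≥ μ_min > 0, h satisfying (H1) and (H2), f satisfying (F1), (F2), (F3) with f(x,s)=0 for s ≤ 0, and g ∈ ℋ'. Then there exists ε₁ > 0 such that for every ε with 0 < ε < ε₁ there are constants r_ε > 0 and δ_ε > 0 with J_ε(u) ≥ δ_ε for all u ∈ ℋ with (1/2)r_ε ≤ ‖u‖_ℋ ≤ 2r_ε; moreover r_ε can be chosen so that r_ε → 0 as ε → 0. -/

import Mathlib

open Filter Topology

namespace GraphNLE

variable {V : Type*}

/-- Integral of `g` over `V` w.r.t. the measure `μ`: `∫_V g dμ = Σ_x μ(x) g(x)`. -/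
noncomputable def intV (μ g : V → ℝ) : ℝ := ∑' x, μ x * g x

/-- The graph (μ-)Laplacian: `Δu(x) = (1/μ(x)) Σ_{y} w_{xy} (u(y)-u(x))`. -/
noncomputable def lap (w : V → V → ℝ) (μ u : V → ℝ) (x : V) : ℝ :=
  (1 / μ x) * ∑' y, w x y * (u y - u x)

/-- Squared length of the gradient: `|∇u|²(x) = (1/(2μ(x))) Σ_y w_{xy} (u(y)-u(x))²`. -/
noncomputable def gradSq (w : V → V → ℝ) (μ u : V → ℝ) (x : V) : ℝ :=
  (1 / (2 * μ x)) * ∑' y, w x y * (u y - u x) ^ 2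

/-- The gradient form `Γ(u,v)(x) = (1/(2μ(x))) Σ_y w_{xy} (u(y)-u(x))(v(y)-v(x))`. -/
noncomputable def gamma (w : V → V → ℝ) (μ u v : V → ℝ) (x : V) : ℝ :=
  (1 / (2 * μ x)) * ∑' y, w x y * (u y - u x) * (v y - v x)

/-- Membership in `W^{1,2}(V)`: finite `∫(|∇u|² + u²) dμ`. -/
def memW (w : V → V → ℝ) (μ u : V → ℝ) : Prop :=
  Summable (fun x => μ x * gradSq w μ u x) ∧ Summable (fun x => μ x * u x ^ 2)

/-- The `W^{1,2}` norm `(∫_V (|∇u|² + u²) dμ)^{1/2}`. -/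
noncomputable def normW (w : V → V → ℝ) (μ u : V → ℝ) : ℝ :=
  Real.sqrt (intV μ fun x => gradSq w μ u x + u x ^ 2)

/-- Membership in the space `ℋ`: finite `∫(|∇u|² + h u²) dμ`. -/
def memH (w : V → V → ℝ) (μ h u : V → ℝ) : Prop :=
  Summable (fun x => μ x * gradSq w μ u x) ∧ Summable (fun x => μ x * (h x * u x ^ 2))

/-- The norm of `ℋ`: `‖u‖_ℋ = (∫_V (|∇u|² + h u²) dμ)^{1/2}`. -/
noncomputable def normH (w : V → V → ℝ) (μ h u : V → ℝ) : ℝ :=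
  Real.sqrt (intV μ fun x => gradSq w μ u x + h x * u x ^ 2)

/-- The inner product of `ℋ`: `⟨u,v⟩_ℋ = ∫_V (Γ(u,v) + h u v) dμ`. -/
noncomputable def innerH (w : V → V → ℝ) (μ h u v : V → ℝ) : ℝ :=
  intV μ fun x => gamma w μ u v x + h x * u x * v x

/-- `λ₁ = inf { ∫(|∇u|² + h u²) dμ : u ∈ ℋ, ∫ u² dμ = 1 }`. -/
noncomputable def lambda1 (w : V → V → ℝ) (μ h : V → ℝ) : ℝ :=
  sInf {t : ℝ | ∃ u : V → ℝ, memH w μ h u ∧ intV μ (fun x => u x ^ 2) = 1 ∧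
    intV μ (fun x => gradSq w μ u x + h x * u x ^ 2) = t}

/-- The primitive `F(x,s) = ∫_0^s f(x,t) dt`. -/
noncomputable def Fint (f : V → ℝ → ℝ) (x : V) (s : ℝ) : ℝ := ∫ t in (0:ℝ)..s, f x t

/-- The functional `J(u) = (1/2)∫(|∇u|² + h u²) dμ − ∫ F(x,u) dμ`. -/
noncomputable def energy (w : V → V → ℝ) (μ h : V → ℝ) (f : V → ℝ → ℝ) (u : V → ℝ) : ℝ :=
  (1 / 2) * intV μ (fun x => gradSq w μ u x + h x * u x ^ 2) -
    intV μ (fun x => Fint f x (u x))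

/-- The perturbed functional `J_ε(u) = J(u) − ε ∫ g u dμ`. -/
noncomputable def energyP (w : V → V → ℝ) (μ h : V → ℝ) (f : V → ℝ → ℝ) (g : V → ℝ)
    (ε : ℝ) (u : V → ℝ) : ℝ :=
  energy w μ h f u - ε * intV μ (fun x => g x * u x)

/-- Weak convergence `u_k ⇀ u` in the Hilbert space `ℋ`. -/
def weakConvH (w : V → V → ℝ) (μ h : V → ℝ) (uk : ℕ → V → ℝ) (u : V → ℝ) : Prop :=
  ∀ v : V → ℝ, memH w μ h v →
    Tendsto (fun k => innerH w μ h (uk k) v) atTop (nhds (innerH w μ h u v))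

/-- The `L^q(V,μ)` norm for finite `q`. -/
noncomputable def LqNorm (μ : V → ℝ) (q : ℝ) (u : V → ℝ) : ℝ :=
  (intV μ fun x => |u x| ^ q) ^ (1 / q)

/-- The `L^∞(V)` norm `sup_x |u(x)|`. -/
noncomputable def LinfNorm (u : V → ℝ) : ℝ := ⨆ x, |u x|

/-- `g` (viewed via the pairing `u ↦ ∫ g u dμ`) belongs to the dual `ℋ'` of `ℋ`. -/
def memHdual (w : V → V → ℝ) (μ h g : V → ℝ) : Prop :=
  ∃ C : ℝ, ∀ u : V → ℝ, memH w μ h u →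
    Summable (fun x => μ x * (g x * u x)) ∧
    |intV μ fun x => g x * u x| ≤ C * normH w μ h u

/-- `u ∈ ℋ` is a weak solution of `−Δu + hu = f(x,u)`. -/
def weakSol (w : V → V → ℝ) (μ h : V → ℝ) (f : V → ℝ → ℝ) (u : V → ℝ) : Prop :=
  memH w μ h u ∧ ∀ φ : V → ℝ, memH w μ h φ →
    intV μ (fun x => gamma w μ u φ x + h x * u x * φ x) =
      intV μ (fun x => f x (u x) * φ x)

/-- `u ∈ ℋ` is a weak solution of the perturbed equation `−Δu + hu = f(x,u) + εg`. -/
def weakSolP (w : V → V → ℝ) (μ h : V → ℝ) (f : V → ℝ → ℝ) (g : V → ℝ) (ε : ℝ)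
    (u : V → ℝ) : Prop :=
  memH w μ h u ∧ ∀ φ : V → ℝ, memH w μ h φ →
    intV μ (fun x => gamma w μ u φ x + h x * u x * φ x) =
      intV μ (fun x => f x (u x) * φ x) + ε * intV μ (fun x => g x * φ x)

/-- The simple graph underlying the weights `w` (edges where the weight is nonzero). -/
def adjGraph (w : V → V → ℝ) : SimpleGraph V where
  Adj x y := x ≠ y ∧ (w x y ≠ 0 ∨ w y x ≠ 0)
  symm := ⟨fun x y hxy => ⟨hxy.1.symm, hxy.2.symm⟩⟩
  loopless := ⟨fun x hx => hx.1 rfl⟩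

/-!
Every `u` in the `ℋ`-ball of radius `ρ √(μmin h₀)` stays below `ρ` pointwise, because
`μ(x) h(x) u(x)² ≤ ‖u‖²_ℋ`. There (F3), together with `F = 0` on `s ≤ 0`, gives
`∫ F(u) ≤ (c⁺/2) ∫ u²`, and the Poincaré inequality `λ₁ ∫ u² ≤ ‖u‖²_ℋ` with `c < λ₁` turns this
into `J(u) ≥ α ‖u‖²_ℋ` for some `α > 0`. The perturbation costs at most `ε C ‖u‖_ℋ`, so with
`r_ε = K ε` for `K` large the quadratic term wins on `r_ε/2 ≤ ‖u‖_ℋ ≤ 2 r_ε`, leaving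
`δ_ε = K ε² / 4`.
-/

noncomputable def formH (w : V → V → ℝ) (μ h u : V → ℝ) : ℝ :=
  intV μ fun x => gradSq w μ u x + h x * u x ^ 2

section Integral

variable {μ : V → ℝ}

theorem intV_const_mul (c : ℝ) (g : V → ℝ) : intV μ (fun x => c * g x) = c * intV μ g := by
  unfold intV
  rw [← tsum_mul_left]
  exact tsum_congr fun x => by ring

theorem intV_nonneg (hμ : ∀ x, 0 ≤ μ x) {g : V → ℝ} (hg : ∀ x, 0 ≤ g x) : 0 ≤ intV μ g :=
  tsum_nonneg fun x => mul_nonneg (hμ x) (hg x)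

theorem intV_mono (hμ : ∀ x, 0 ≤ μ x) {φ ψ : V → ℝ} (hφ : ∀ x, 0 ≤ φ x)
    (hφψ : ∀ x, φ x ≤ ψ x) (hψ : Summable fun x => μ x * ψ x) : intV μ φ ≤ intV μ ψ := by
  have hle : ∀ x, μ x * φ x ≤ μ x * ψ x := fun x => mul_le_mul_of_nonneg_left (hφψ x) (hμ x)
  exact (hψ.of_nonneg_of_le (fun x => mul_nonneg (hμ x) (hφ x)) hle).tsum_le_tsum hle hψ

end Integral

section Form

variable {w : V → V → ℝ} {μ h : V → ℝ}

theorem gradSq_nonneg (hw : ∀ x y, 0 ≤ w x y) (hμ : ∀ x, 0 ≤ μ x) (u : V → ℝ) (x : V) :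
    0 ≤ gradSq w μ u x :=
  mul_nonneg (by have := hμ x; positivity)
    (tsum_nonneg fun y => mul_nonneg (hw x y) (sq_nonneg _))

theorem gradSq_const_mul (t : ℝ) (u : V → ℝ) (x : V) :
    gradSq w μ (fun y => t * u y) x = t ^ 2 * gradSq w μ u x := by
  unfold gradSq
  rw [mul_left_comm (t ^ 2)]
  congr 1
  rw [← tsum_mul_left]
  exact tsum_congr fun y => by ring

theorem formH_const_mul (t : ℝ) (u : V → ℝ) :
    formH w μ h (fun y => t * u y) = t ^ 2 * formH w μ h u := by
  rw [formH, formH, ← intV_const_mul]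
  exact congrArg _ (funext fun x => by rw [gradSq_const_mul]; ring)

theorem memH_const_mul {u : V → ℝ} (hu : memH w μ h u) (t : ℝ) :
    memH w μ h (fun y => t * u y) := by
  refine ⟨?_, ?_⟩
  · exact (hu.1.mul_left (t ^ 2)).congr fun x => by rw [gradSq_const_mul]; ring
  · exact (hu.2.mul_left (t ^ 2)).congr fun x => by ring

variable (hw : ∀ x y, 0 ≤ w x y) (hμ : ∀ x, 0 ≤ μ x) (hh : ∀ x, 0 ≤ h x)
include hw hμ hh

theorem formH_nonneg (u : V → ℝ) : 0 ≤ formH w μ h u :=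
  intV_nonneg hμ fun x => add_nonneg (gradSq_nonneg hw hμ u x) (mul_nonneg (hh x) (sq_nonneg _))

theorem sq_normH (u : V → ℝ) : normH w μ h u ^ 2 = formH w μ h u :=
  Real.sq_sqrt (formH_nonneg hw hμ hh u)

theorem mul_sq_le_formH {u : V → ℝ} (hu : memH w μ h u) (x : V) :
    μ x * (h x * u x ^ 2) ≤ formH w μ h u := by
  have hsum : Summable fun y => μ y * (gradSq w μ u y + h y * u y ^ 2) := by
    simpa only [mul_add] using hu.1.add hu.2
  calc μ x * (h x * u x ^ 2)
      ≤ μ x * (gradSq w μ u x + h x * u x ^ 2) :=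
        mul_le_mul_of_nonneg_left (le_add_of_nonneg_left (gradSq_nonneg hw hμ u x)) (hμ x)
    _ ≤ formH w μ h u := hsum.le_tsum x fun y _ =>
        mul_nonneg (hμ y) (add_nonneg (gradSq_nonneg hw hμ u y) (mul_nonneg (hh y) (sq_nonneg _)))

theorem lambda1_nonneg : 0 ≤ lambda1 w μ h := by
  refine Real.sInf_nonneg ?_
  rintro t ⟨u, -, -, rfl⟩
  exact formH_nonneg hw hμ hh u

/-- Poincaré inequality: normalising `u` in `L²` compares it with the infimum `λ₁`. -/
theorem lambda1_mul_le_formH {u : V → ℝ} (hu : memH w μ h u) :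
    lambda1 w μ h * intV μ (fun x => u x ^ 2) ≤ formH w μ h u := by
  rcases (intV_nonneg hμ fun x => sq_nonneg (u x)).eq_or_lt with hS | hS
  · rw [← hS, mul_zero]
    exact formH_nonneg hw hμ hh u
  set S := intV μ fun x => u x ^ 2
  set t := 1 / Real.sqrt S
  have ht : t ^ 2 = 1 / S := by rw [div_pow, one_pow, Real.sq_sqrt hS.le]
  have hnormal : intV μ (fun x => (t * u x) ^ 2) = 1 := by
    simp only [mul_pow]
    rw [intV_const_mul, ht, one_div_mul_cancel hS.ne']
  have hle : lambda1 w μ h ≤ formH w μ h (fun y => t * u y) :=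
    csInf_le ⟨0, fun _ ⟨v, _, _, hv⟩ => hv ▸ formH_nonneg hw hμ hh v⟩
      ⟨_, memH_const_mul hu t, hnormal, rfl⟩
  rw [formH_const_mul, ht, one_div_mul_eq_div] at hle
  exact (le_div_iff₀ hS).mp hle

theorem exists_pos_mul_formH_le {c : ℝ} (hc : c < lambda1 w μ h) :
    ∃ α > 0, ∀ u, memH w μ h u →
      α * formH w μ h u ≤ (formH w μ h u - max c 0 * intV μ (fun x => u x ^ 2)) / 2 := by
  rcases (lambda1_nonneg hw hμ hh).eq_or_lt with hlam | hlam
  -- `λ₁ = sInf ∅ = 0` when no `u ∈ ℋ` has `∫ u² = 1`; then `c < 0`.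
  · refine ⟨1 / 2, one_half_pos, fun u _ => ?_⟩
    rw [max_eq_right (hlam ▸ hc).le]
    linarith
  set lam := lambda1 w μ h
  have hclam : max c 0 < lam := max_lt hc hlam
  refine ⟨(lam - max c 0) / (2 * lam), div_pos (sub_pos.2 hclam) (by positivity), fun u hu => ?_⟩
  have hP : max c 0 * intV μ (fun x => u x ^ 2) ≤ max c 0 / lam * formH w μ h u := by
    calc max c 0 * intV μ (fun x => u x ^ 2)
        = max c 0 / lam * (lam * intV μ (fun x => u x ^ 2)) := by field_simp
      _ ≤ max c 0 / lam * formH w μ h u :=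
        mul_le_mul_of_nonneg_left (lambda1_mul_le_formH hw hμ hh hu)
          (div_nonneg (le_max_right c 0) hlam.le)
  have hα : (lam - max c 0) / (2 * lam) = (1 - max c 0 / lam) / 2 := by field_simp
  rw [hα]
  linarith

end Form

theorem summable_sq_of_memH {w : V → V → ℝ} {μ h : V → ℝ} {h₀ : ℝ} (hμ : ∀ x, 0 ≤ μ x)
    (hh₀ : 0 < h₀) (hH1 : ∀ x, h₀ ≤ h x) {u : V → ℝ} (hu : memH w μ h u) :
    Summable fun x => μ x * u x ^ 2 := by
  refine (hu.2.mul_left (1 / h₀)).of_nonneg_of_le (fun x => mul_nonneg (hμ x) (sq_nonneg _))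
    fun x => ?_
  rw [one_div_mul_eq_div, le_div_iff₀ hh₀]
  nlinarith [mul_le_mul_of_nonneg_left (hH1 x) (mul_nonneg (hμ x) (sq_nonneg (u x)))]

theorem lt_of_normH_lt {w : V → V → ℝ} {μ h : V → ℝ} {μmin h₀ ρ : ℝ} (hw : ∀ x y, 0 ≤ w x y)
    (hμmin : 0 < μmin) (hμ : ∀ x, μmin ≤ μ x) (hh₀ : 0 < h₀) (hH1 : ∀ x, h₀ ≤ h x)
    (hρ : 0 < ρ) {u : V → ℝ} (hu : memH w μ h u)
    (hn : normH w μ h u < ρ * Real.sqrt (μmin * h₀)) (x : V) : u x < ρ := by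
  have hμ0 : ∀ x, 0 ≤ μ x := fun x => hμmin.le.trans (hμ x)
  have hh0 : ∀ x, 0 ≤ h x := fun x => hh₀.le.trans (hH1 x)
  have hform : formH w μ h u < μmin * h₀ * ρ ^ 2 := by
    rw [← sq_normH hw hμ0 hh0]
    calc normH w μ h u ^ 2 < (ρ * Real.sqrt (μmin * h₀)) ^ 2 :=
          pow_lt_pow_left₀ hn (Real.sqrt_nonneg _) two_ne_zero
      _ = μmin * h₀ * ρ ^ 2 := by rw [mul_pow, Real.sq_sqrt (by positivity)]; ring
  have hpt : μmin * h₀ * u x ^ 2 ≤ μ x * (h x * u x ^ 2) := by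
    rw [← mul_assoc]
    exact mul_le_mul_of_nonneg_right (mul_le_mul (hμ x) (hH1 x) hh₀.le (hμ0 x)) (sq_nonneg _)
  have hsq : u x ^ 2 < ρ ^ 2 :=
    lt_of_mul_lt_mul_left ((hpt.trans (mul_sq_le_formH hw hμ0 hh0 hu x)).trans_lt hform)
      (by positivity)
  exact (le_abs_self _).trans_lt (abs_lt_of_sq_lt_sq hsq hρ.le)

theorem exists_nonneg_of_memHdual {w : V → V → ℝ} {μ h g : V → ℝ} (hg : memHdual w μ h g) :
    ∃ C ≥ 0, ∀ u, memH w μ h u → intV μ (fun x => g x * u x) ≤ C * normH w μ h u := by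
  obtain ⟨C, hC⟩ := hg
  refine ⟨max C 0, le_max_right C 0, fun u hu => ?_⟩
  calc intV μ (fun x => g x * u x) ≤ C * normH w μ h u := (le_abs_self _).trans (hC u hu).2
    _ ≤ max C 0 * normH w μ h u :=
      mul_le_mul_of_nonneg_right (le_max_left C 0) (Real.sqrt_nonneg _)

section Nonlinearity

variable {f : V → ℝ → ℝ}

theorem Fint_eq_zero_of_nonpos (hf : ∀ x, ∀ s : ℝ, s ≤ 0 → f x s = 0) (x : V) {s : ℝ}
    (hs : s ≤ 0) : Fint f x s = 0 := by
  unfold Fint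
  rw [intervalIntegral.integral_congr (g := fun _ => (0 : ℝ)) ?_, intervalIntegral.integral_zero]
  intro t ht
  rw [Set.uIcc_of_ge hs] at ht
  exact hf x t ht.2

theorem Fint_bounds_of_lt {c ρ : ℝ} (hpos : ∀ x, ∀ s : ℝ, 0 < s → 0 < Fint f x s)
    (hsmall : ∀ x, ∀ s : ℝ, 0 < s → s < ρ → 2 * Fint f x s ≤ c * s ^ 2)
    (hneg : ∀ x, ∀ s : ℝ, s ≤ 0 → f x s = 0) (x : V) {s : ℝ} (hs : s < ρ) :
    0 ≤ Fint f x s ∧ 2 * Fint f x s ≤ max c 0 * s ^ 2 := by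
  rcases le_or_gt s 0 with hs0 | hs0
  · rw [Fint_eq_zero_of_nonpos hneg x hs0]
    exact ⟨le_rfl, by rw [mul_zero]; exact mul_nonneg (le_max_right c 0) (sq_nonneg s)⟩
  · exact ⟨(hpos x s hs0).le, (hsmall x s hs0 hs).trans
      (mul_le_mul_of_nonneg_right (le_max_left c 0) (sq_nonneg s))⟩

theorem le_energy_of_forall_lt {w : V → V → ℝ} {μ h : V → ℝ} {c ρ : ℝ} (hμ : ∀ x, 0 ≤ μ x)
    (hF : ∀ x, ∀ s : ℝ, s < ρ → 0 ≤ Fint f x s ∧ 2 * Fint f x s ≤ c * s ^ 2)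
    {u : V → ℝ} (hsum : Summable fun x => μ x * u x ^ 2) (hρ : ∀ x, u x < ρ) :
    (formH w μ h u - c * intV μ (fun x => u x ^ 2)) / 2 ≤ energy w μ h f u := by
  have hint : intV μ (fun x => Fint f x (u x)) ≤ c / 2 * intV μ (fun x => u x ^ 2) := by
    rw [← intV_const_mul]
    exact intV_mono hμ (fun x => (hF x _ (hρ x)).1)
      (fun x => by linarith [(hF x _ (hρ x)).2])
      ((hsum.mul_left (c / 2)).congr fun x => by ring)
  rw [energy, ← formH]
  linarith

end Nonlinearity

/-- With `r = K ε` and `α K = 8 β + 1`, the bound `α t² - ε β t` on `[r/2, 2r]` is at least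
`α (r/2)² - ε β (2r) = K ε² / 4`. -/
theorem div_four_mul_sq_le_of_mem_Icc {α β K ε t : ℝ} (hα : 0 < α) (hβ : 0 ≤ β)
    (hK : α * K = 8 * β + 1) (hε : 0 < ε) (ht : t ∈ Set.Icc (K * ε / 2) (2 * (K * ε))) :
    K / 4 * ε ^ 2 ≤ α * t ^ 2 - ε * (β * t) := by
  have hK0 : 0 < K := pos_of_mul_pos_right (hK ▸ by positivity) hα.le
  have hsq : α * (K * ε / 2) ^ 2 ≤ α * t ^ 2 :=
    mul_le_mul_of_nonneg_left (pow_le_pow_left₀ (by positivity) ht.1 2) hα.le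
  have hlin : ε * (β * t) ≤ ε * (β * (2 * (K * ε))) := by gcongr; exact ht.2
  nlinarith

theorem perturbed_mountain_pass_geometry_general
    (w : V → V → ℝ) (hwnn : ∀ x y, 0 ≤ w x y)
    (μ : V → ℝ) (μmin : ℝ) (hμmin : 0 < μmin) (hμ : ∀ x, μmin ≤ μ x)
    (h : V → ℝ) (h₀ : ℝ) (hh₀ : 0 < h₀) (hH1 : ∀ x, h₀ ≤ h x)
    (f : V → ℝ → ℝ)
    (hF2 : ∃ θ : ℝ, 2 < θ ∧ ∀ x, ∀ s : ℝ, 0 < s →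
      0 < θ * Fint f x s ∧ θ * Fint f x s ≤ s * f x s)
    (hF3 : ∃ c : ℝ, c < lambda1 w μ h ∧ ∃ ρ : ℝ, 0 < ρ ∧
      ∀ x, ∀ s : ℝ, 0 < s → s < ρ → 2 * Fint f x s ≤ c * s ^ 2)
    (hfneg : ∀ x, ∀ s : ℝ, s ≤ 0 → f x s = 0)
    (g : V → ℝ) (hgdual : memHdual w μ h g) :
    ∃ ε₁ : ℝ, 0 < ε₁ ∧ ∃ r δ : ℝ → ℝ,
      (∀ ε : ℝ, 0 < ε → ε < ε₁ → 0 < r ε ∧ 0 < δ ε ∧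
        ∀ u : V → ℝ, memH w μ h u →
          r ε / 2 ≤ normH w μ h u → normH w μ h u ≤ 2 * r ε →
          δ ε ≤ energyP w μ h f g ε u) ∧
      Tendsto r (nhdsWithin 0 (Set.Ioi 0)) (nhds 0) := by
  obtain ⟨θ, hθ, hF2⟩ := hF2
  obtain ⟨c, hc, ρ, hρ, hF3⟩ := hF3
  obtain ⟨β, hβ, hg⟩ := exists_nonneg_of_memHdual hgdual
  have hμ0 : ∀ x, 0 ≤ μ x := fun x => hμmin.le.trans (hμ x)
  have hh0 : ∀ x, 0 ≤ h x := fun x => hh₀.le.trans (hH1 x)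
  have hF : ∀ x, ∀ s : ℝ, s < ρ → 0 ≤ Fint f x s ∧ 2 * Fint f x s ≤ max c 0 * s ^ 2 :=
    Fint_bounds_of_lt (fun x s hs => pos_of_mul_pos_right (hF2 x s hs).1 (by linarith)) hF3 hfneg
  obtain ⟨α, hα, hcoer⟩ := exists_pos_mul_formH_le hwnn hμ0 hh0 hc
  set K := (8 * β + 1) / α
  have hK : α * K = 8 * β + 1 := mul_div_cancel₀ _ hα.ne'
  refine ⟨ρ * Real.sqrt (μmin * h₀) / (2 * K), by positivity, fun ε => K * ε,
    fun ε => K / 4 * ε ^ 2, fun ε hε hε₁ => ⟨by positivity, by positivity, fun u hu hlo hhi => ?_⟩,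
    ((continuous_const_mul K).tendsto' 0 0 (mul_zero K)).mono_left nhdsWithin_le_nhds⟩
  have hsmall : normH w μ h u < ρ * Real.sqrt (μmin * h₀) := by
    rw [lt_div_iff₀ (by positivity)] at hε₁
    linarith
  have hJ : α * normH w μ h u ^ 2 ≤ energy w μ h f u := by
    rw [sq_normH hwnn hμ0 hh0]
    exact (hcoer u hu).trans (le_energy_of_forall_lt hμ0 hF (summable_sq_of_memH hμ0 hh₀ hH1 hu)
      (lt_of_normH_lt hwnn hμmin hμ hh₀ hH1 hρ hu hsmall))
  have hpert : ε * intV μ (fun x => g x * u x) ≤ ε * (β * normH w μ h u) :=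
    mul_le_mul_of_nonneg_left (hg u hu) hε.le
  calc K / 4 * ε ^ 2 ≤ α * normH w μ h u ^ 2 - ε * (β * normH w μ h u) :=
        div_four_mul_sq_le_of_mem_Icc hα hβ hK hε ⟨hlo, hhi⟩
    _ ≤ energyP w μ h f g ε u := by rw [energyP]; linarith

theorem perturbed_mountain_pass_geometry
    (w : V → V → ℝ) (hsymm : ∀ x y, w x y = w y x) (hwnn : ∀ x y, 0 ≤ w x y)
    (hlf : ∀ x : V, {y | w x y ≠ 0}.Finite)
    (μ : V → ℝ) (μmin : ℝ) (hμmin : 0 < μmin) (hμ : ∀ x, μmin ≤ μ x)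
    (h : V → ℝ) (h₀ : ℝ) (hh₀ : 0 < h₀) (hH1 : ∀ x, h₀ ≤ h x)
    (hH2 : Summable fun x => μ x * (1 / h x))
    (f : V → ℝ → ℝ)
    (hF1c : ∀ x, Continuous (f x)) (hF10 : ∀ x, f x 0 = 0)
    (hF1b : ∀ M : ℝ, 0 < M → ∃ A : ℝ, ∀ x, ∀ s ∈ Set.Icc (0:ℝ) M, f x s ≤ A)
    (hF2 : ∃ θ : ℝ, 2 < θ ∧ ∀ x, ∀ s : ℝ, 0 < s →
      0 < θ * Fint f x s ∧ θ * Fint f x s ≤ s * f x s)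
    (hF3 : ∃ c : ℝ, c < lambda1 w μ h ∧ ∃ ρ : ℝ, 0 < ρ ∧
      ∀ x, ∀ s : ℝ, 0 < s → s < ρ → 2 * Fint f x s ≤ c * s ^ 2)
    (hfneg : ∀ x, ∀ s : ℝ, s ≤ 0 → f x s = 0)
    (g : V → ℝ) (hgdual : memHdual w μ h g) :
    ∃ ε₁ : ℝ, 0 < ε₁ ∧ ∃ r δ : ℝ → ℝ,
      (∀ ε : ℝ, 0 < ε → ε < ε₁ → 0 < r ε ∧ 0 < δ ε ∧
        ∀ u : V → ℝ, memH w μ h u →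
          r ε / 2 ≤ normH w μ h u → normH w μ h u ≤ 2 * r ε →
          δ ε ≤ energyP w μ h f g ε u) ∧
      Tendsto r (nhdsWithin 0 (Set.Ioi 0)) (nhds 0) :=
  perturbed_mountain_pass_geometry_general w hwnn μ μmin hμmin hμ h h₀ hh₀ hH1 f hF2 hF3 hfneg g
    hgdual

end GraphNLE
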